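/- In the geometric realization of a connected simply connected Cartan graph 𝒞 with real root system, let b ∈ A and let H ⊂ V be a hyperplane. Then H ∈ W^b (i.e. H = ker β for some β ∈ B^b) if and only if H ∩ K^b = ∅ and H ∩ cl(K^b) spans H. -/

import Mathlib

open Set

noncomputable section

section Arrangements

variable {V : Type*} [AddCommGroup V] [Module ℝ V] [TopologicalSpace V]

/-- The kernel of a linear functional, as a subset of `V`. -/
def dualKer (α : Module.Dual ℝ V) : Set V := {v | α v = 0}

/-- A linear hyperplane: the kernel of a nonzero linear functional. -/
def IsLinearHyperplane (H : Set V) : Prop :=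
  ∃ α : Module.Dual ℝ V, α ≠ 0 ∧ H = dualKer α

/-- A hyperplane arrangement `(𝒜, T)`: `T` is an open convex cone, `𝒜` a set of linear
hyperplanes, each meeting `T`, which is locally finite in `T`. -/
structure IsHyperplaneArrangement (𝒜 : Set (Set V)) (T : Set V) : Prop where
  T_nonempty : T.Nonempty
  T_open : IsOpen T
  T_convex : Convex ℝ T
  T_cone : ∀ x ∈ T, ∀ c : ℝ, 0 < c → c • x ∈ T
  hyperplanes : ∀ H ∈ 𝒜, IsLinearHyperplane H
  meets : ∀ H ∈ 𝒜, (H ∩ T).Nonempty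
  locallyFinite : ∀ x ∈ T, ∃ U : Set V, IsOpen U ∧ x ∈ U ∧ U ⊆ T ∧
    {H ∈ 𝒜 | (H ∩ U).Nonempty}.Finite

/-- The chambers: connected components of `T \ ⋃ 𝒜`. -/
def chambersOf (𝒜 : Set (Set V)) (T : Set V) : Set (Set V) :=
  {K | ∃ x ∈ T \ ⋃₀ 𝒜, K = connectedComponentIn (T \ ⋃₀ 𝒜) x}

/-- `H` is a wall of the chamber `K`: a hyperplane missing `K` such that
`H ∩ cl(K)` spans `H`. -/
def IsWall (K H : Set V) : Prop :=
  IsLinearHyperplane H ∧ H ∩ K = ∅ ∧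
    (Submodule.span ℝ (H ∩ closure K) : Set V) = H

/-- An open simplicial cone: `⋂_{α ∈ B} α⁻¹(ℝ_{>0})` for a basis `B` of the dual space. -/
def IsOpenSimplicialCone (K : Set V) : Prop :=
  ∃ b : Module.Basis (Fin (Module.finrank ℝ V)) ℝ (Module.Dual ℝ V),
    K = {v | ∀ i, 0 < b i v}

/-- A Tits arrangement: a hyperplane arrangement all of whose chambers are open simplicial
cones (simplicial) and such that every wall of every chamber belongs to `𝒜` (thin). -/
structure IsTitsArrangement (𝒜 : Set (Set V)) (T : Set V) extends
    IsHyperplaneArrangement 𝒜 T : Prop where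
  simplicial : ∀ K ∈ chambersOf 𝒜 T, IsOpenSimplicialCone K
  thin : ∀ K ∈ chambersOf 𝒜 T, ∀ H : Set V, IsWall K H → H ∈ 𝒜

/-- `R` is a root system with associated arrangement `𝒜`: `0 ∉ R`, `R = -R` and
`𝒜 = {ker α | α ∈ R}`. -/
def IsAssociatedRootSystem (𝒜 : Set (Set V)) (R : Set (Module.Dual ℝ V)) : Prop :=
  (0 : Module.Dual ℝ V) ∉ R ∧ (∀ α ∈ R, -α ∈ R) ∧ 𝒜 = {H | ∃ α ∈ R, H = dualKer α}

/-- The root basis `B^K` of a chamber `K`. -/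
def rootBasisOf (R : Set (Module.Dual ℝ V)) (K : Set V) : Set (Module.Dual ℝ V) :=
  {α ∈ R | IsWall K (dualKer α) ∧ ∀ x ∈ K, 0 < α x}

/-- `β` is a non-negative real linear combination of elements of `B`. -/
def InNNRealSpan (B : Set (Module.Dual ℝ V)) (β : Module.Dual ℝ V) : Prop :=
  ∃ (s : Finset (Module.Dual ℝ V)) (c : Module.Dual ℝ V → ℝ),
    ↑s ⊆ B ∧ (∀ α ∈ s, 0 ≤ c α) ∧ β = ∑ α ∈ s, c α • α

/-- `β` is a non-negative integral linear combination of elements of `B`. -/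
def InNatSpan (B : Set (Module.Dual ℝ V)) (β : Module.Dual ℝ V) : Prop :=
  ∃ (s : Finset (Module.Dual ℝ V)) (c : Module.Dual ℝ V → ℕ),
    ↑s ⊆ B ∧ β = ∑ α ∈ s, (c α : ℝ) • α

/-- `β` is an integral linear combination of elements of `B`. -/
def InIntSpan (B : Set (Module.Dual ℝ V)) (β : Module.Dual ℝ V) : Prop :=
  ∃ (s : Finset (Module.Dual ℝ V)) (c : Module.Dual ℝ V → ℤ),
    ↑s ⊆ B ∧ β = ∑ α ∈ s, (c α : ℝ) • α

/-- The crystallographic property: `R ⊆ ±∑_{α ∈ B^K} ℕ₀ α` for every chamber `K`. -/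
def IsCrystallographic (𝒜 : Set (Set V)) (T : Set V) (R : Set (Module.Dual ℝ V)) : Prop :=
  ∀ K ∈ chambersOf 𝒜 T, ∀ β ∈ R,
    InNatSpan (rootBasisOf R K) β ∨ InNatSpan (rootBasisOf R K) (-β)

/-- The chamber complex `𝒮(𝒜,T)`. -/
def chamberComplexOf (𝒜 : Set (Set V)) (T : Set V) : Set (Set V) :=
  {S | ∃ K ∈ chambersOf 𝒜 T, ∃ W : Set (Set V),
    (∀ H ∈ W, IsWall K H) ∧ S = closure K ∩ ⋂₀ W}

/-- `(𝒜,T)` is `k`-spherical: every simplex of the chamber complex of codimension `k`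
meets `T`. -/
def IsKSpherical (𝒜 : Set (Set V)) (T : Set V) (k : ℕ) : Prop :=
  ∀ S ∈ chamberComplexOf 𝒜 T,
    Module.finrank ℝ (Submodule.span ℝ S) = Module.finrank ℝ V - k → (S ∩ T).Nonempty

/-- A reduced root system: `R ∩ ℝα = {±α}` for every `α ∈ R`. -/
def IsReducedRS (R : Set (Module.Dual ℝ V)) : Prop :=
  ∀ α ∈ R, {β ∈ R | ∃ c : ℝ, β = c • α} = {α, -α}

/-- The hyperplane `H` separates `K` and `K'`. -/
def SeparatesH (H K K' : Set V) : Prop :=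
  ∃ α : Module.Dual ℝ V, H = dualKer α ∧ (∀ x ∈ K, 0 < α x) ∧ ∀ x ∈ K', α x < 0

/-- The set `S(K,K')` of hyperplanes of `𝒜` separating `K` and `K'`. -/
def sepSet (𝒜 : Set (Set V)) (K K' : Set V) : Set (Set V) :=
  {H ∈ 𝒜 | SeparatesH H K K'}

/-- The reduction of a set of functionals: the shortest elements on each line. -/
def reducedOf (S : Set (Module.Dual ℝ V)) : Set (Module.Dual ℝ V) :=
  {β ∈ S | ∀ γ ∈ S, ∀ c : ℝ, γ = c • β → 1 ≤ |c|}

end Arrangements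

/-- The standard real vector space `ℝ^r`. -/
abbrev Vr (r : ℕ) : Type := Fin r → ℝ
section CartanGraphs

/-- A generalized Cartan matrix. -/
def IsGCM {I : Type*} (C : Matrix I I ℤ) : Prop :=
  (∀ i, C i i = 2) ∧ (∀ i j, i ≠ j → C i j ≤ 0) ∧
    ∀ i j, i ≠ j → C i j = 0 → C j i = 0

variable {I A : Type*} [Fintype I] [DecidableEq I]

/-- The reflection `σ_i` attached to a generalized Cartan matrix, acting on `ℤ^I`;
on the standard basis it is `σ_i(α_j) = α_j - c_{ij} α_i`. -/
def gcmSigma (C : Matrix I I ℤ) (i : I) : (I → ℤ) → (I → ℤ) :=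
  fun v k => v k - if k = i then ∑ j, C i j * v j else 0

/-- `WeylHom ρ C a b f` : `f` is a morphism from `a` to `b` of the Weyl groupoid of the
Cartan graph `(I, A, ρ, C)`, i.e. a composite of maps `σ_i^c ∈ Hom(c, ρ_i(c))`. -/
inductive WeylHom (ρ : I → A → A) (C : A → Matrix I I ℤ) :
    A → A → ((I → ℤ) → (I → ℤ)) → Prop
  | id (a : A) : WeylHom ρ C a a _root_.id
  | comp {a b : A} {f : (I → ℤ) → (I → ℤ)} (i : I) :
      WeylHom ρ C a b f → WeylHom ρ C a (ρ i b) (gcmSigma (C b) i ∘ f)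

/-- The axioms of a Cartan graph: `A` nonempty, all `C^a` generalized Cartan matrices,
(C1) each `ρ_i` an involution, (C2) `c^a_{ij} = c^{ρ_i(a)}_{ij}`. -/
def IsCartanGraph (ρ : I → A → A) (C : A → Matrix I I ℤ) : Prop :=
  Nonempty A ∧ (∀ a, IsGCM (C a)) ∧ (∀ i, Function.Involutive (ρ i)) ∧
    ∀ a i j, C a i j = C (ρ i a) i j

/-- Connectedness: all Hom-sets of the Weyl groupoid are nonempty. -/
def CGConnected (ρ : I → A → A) (C : A → Matrix I I ℤ) : Prop :=
  ∀ a b : A, ∃ f, WeylHom ρ C a b f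

/-- Simple connectedness: `Hom(a,a) = {id}` for every object `a`. -/
def CGSimplyConnected (ρ : I → A → A) (C : A → Matrix I I ℤ) : Prop :=
  ∀ (a : A) (f : (I → ℤ) → (I → ℤ)), WeylHom ρ C a a f → f = _root_.id

/-- The set of real roots at `a`: all images of standard basis vectors under morphisms
into `a`. -/
def realRootsAt (ρ : I → A → A) (C : A → Matrix I I ℤ) (a : A) : Set (I → ℤ) :=
  {v | ∃ (b : A) (f : (I → ℤ) → (I → ℤ)) (j : I), WeylHom ρ C b a f ∧ v = f (Pi.single j 1)}

/-- A root system of type `𝒞 = (I, A, ρ, C)`: axioms (R1)-(R4). -/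
def IsRootSystemOfType (ρ : I → A → A) (C : A → Matrix I I ℤ)
    (R : A → Set (I → ℤ)) : Prop :=
  (∀ a, R a = {v ∈ R a | ∀ i, 0 ≤ v i} ∪ (fun v => -v) '' {v ∈ R a | ∀ i, 0 ≤ v i}) ∧
  (∀ (a : A) (i : I), {v ∈ R a | ∃ n : ℤ, v = n • Pi.single i 1} =
      {Pi.single i 1, -Pi.single i 1}) ∧
  (∀ (a : A) (i : I), gcmSigma (C a) i '' R a = R (ρ i a)) ∧
  ∀ (a : A) (i j : I), i ≠ j →
    {v ∈ R a | ∃ m n : ℕ, v = (m : ℤ) • Pi.single i 1 + (n : ℤ) • Pi.single j 1}.Finite →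
    (ρ i ∘ ρ j)^[{v ∈ R a |
        ∃ m n : ℕ, v = (m : ℤ) • Pi.single i 1 + (n : ℤ) • Pi.single j 1}.ncard] a = a

end CartanGraphs
section GeometricRealization

variable {r : ℕ} {A : Type*}

/-- The map `ψ : ℤ^r → V*` determined by a basis `(β_i)` of `V*`: `ψ(α_i) = β_i`. -/
def psiMap (bβ : Module.Basis (Fin r) ℝ (Module.Dual ℝ (Vr r))) (v : Fin r → ℤ) :
    Module.Dual ℝ (Vr r) :=
  ∑ i, (v i : ℝ) • bβ i

/-- The open cone `K^b` attached to the (unique) morphism `u ∈ Hom(b,a)`: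
`K^b = ⋂_i ψ_b(α_i)^+` where `ψ_b(α_i) = ψ(u(α_i))`. -/
def Kch (bβ : Module.Basis (Fin r) ℝ (Module.Dual ℝ (Vr r)))
    (u : (Fin r → ℤ) → (Fin r → ℤ)) : Set (Vr r) :=
  {x | ∀ i : Fin r, 0 < psiMap bβ (u (Pi.single i 1)) x}

/-- The root system `R = ψ((R^re)^a)` of the geometric realization. -/
def geoR (ρ : Fin r → A → A) (C : A → Matrix (Fin r) (Fin r) ℤ) (a : A)
    (bβ : Module.Basis (Fin r) ℝ (Module.Dual ℝ (Vr r))) : Set (Module.Dual ℝ (Vr r)) :=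
  psiMap bβ '' realRootsAt ρ C a

/-- The arrangement `𝒜 = {ker α | α ∈ R}` of the geometric realization. -/
def geoA (ρ : Fin r → A → A) (C : A → Matrix (Fin r) (Fin r) ℤ) (a : A)
    (bβ : Module.Basis (Fin r) ℝ (Module.Dual ℝ (Vr r))) : Set (Set (Vr r)) :=
  {H | ∃ α ∈ geoR ρ C a bβ, H = dualKer α}

/-- Adjacency of objects `b, c` of the Cartan graph: the corresponding chambers `K^b`, `K^c`
are distinct and the span of `cl(K^b) ∩ cl(K^c)` is the wall `ker ψ_b(α_i)` for some `i`. -/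
def objAdj (ρ : Fin r → A → A) (C : A → Matrix (Fin r) (Fin r) ℤ) (a : A)
    (bβ : Module.Basis (Fin r) ℝ (Module.Dual ℝ (Vr r))) (b c : A) : Prop :=
  ∃ u u' : (Fin r → ℤ) → (Fin r → ℤ), WeylHom ρ C b a u ∧ WeylHom ρ C c a u' ∧
    ∃ i : Fin r, Kch bβ u ≠ Kch bβ u' ∧
      (Submodule.span ℝ (closure (Kch bβ u) ∩ closure (Kch bβ u')) : Set (Vr r)) =
        dualKer (psiMap bβ (u (Pi.single i 1)))

/-- The gallery distance between the chambers `K^b` and `K^{b'}`: the minimal length of a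
gallery from `K^b` to `K^{b'}`. -/
def galleryDist (ρ : Fin r → A → A) (C : A → Matrix (Fin r) (Fin r) ℤ) (a : A)
    (bβ : Module.Basis (Fin r) ℝ (Module.Dual ℝ (Vr r))) (b b' : A) : ℕ :=
  sInf {m : ℕ | ∃ g : ℕ → A, g 0 = b ∧ g m = b' ∧
    ∀ k < m, objAdj ρ C a bβ (g k) (g (k + 1))}

end GeometricRealization

/-!
Since `C^c_{ii} = 2`, every `σ_i^c` is an involution of `ℤ^r`, so every morphism of the Weyl
groupoid is an automorphism of `ℤ^r` and the `ψ_b(α_i)` form a basis `γ` of `V*`: `K^b` is the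
open simplicial cone `{γ_i > 0}`. Let `(d_j)` be the basis of `V` dual to `γ`; the closure of
the cone is `{γ_i ≥ 0}`, and `ker γ_i` is spanned by the `d_j`, `j ≠ i`, which lie in it.
Conversely, if `H = ker α` misses the convex set `K^b`, then `α` has constant sign on it, say
`α > 0`, so all `α(d_j) ≥ 0` and some `α(d_j) > 0`. Writing `α = ∑ α(d_k) γ_k` shows that
`H ∩ cl(K^b) ⊆ ker γ_j`; as `H ∩ cl(K^b)` spans `H`, the hyperplanes `H` and `ker γ_j` coincide.
-/

section Hyperplanes

variable {V : Type*} [AddCommGroup V] [Module ℝ V]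

lemma dualKer_neg (α : Module.Dual ℝ V) : dualKer (-α) = dualKer α := by
  ext v
  simp [dualKer]

lemma dualKer_eq_of_subset {α β : Module.Dual ℝ V} (hα : α ≠ 0) (hβ : β ≠ 0)
    (h : dualKer α ⊆ dualKer β) : dualKer α = dualKer β := by
  have hcoatom := LinearMap.isCoatom_ker_of_surjective (LinearMap.surjective_of_ne_zero hα)
  rcases hcoatom.le_iff.mp (show LinearMap.ker α ≤ LinearMap.ker β from h) with htop | heq
  · exact absurd (LinearMap.ker_eq_top.mp htop) hβ
  · exact congrArg SetLike.coe heq.symm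

end Hyperplanes

lemma IsPreconnected.forall_pos_or_forall_neg {X : Type*} [TopologicalSpace X] {s : Set X}
    (hs : IsPreconnected s) {f : X → ℝ} (hf : ContinuousOn f s) (h : ∀ x ∈ s, f x ≠ 0) :
    (∀ x ∈ s, 0 < f x) ∨ ∀ x ∈ s, f x < 0 := by
  by_contra! ⟨⟨x, hx, hfx⟩, y, hy, hfy⟩
  obtain ⟨z, hz, hfz⟩ := hs.intermediate_value hx hy hf ⟨hfx, hfy⟩
  exact h z hz hfz

namespace Module.Basis

variable {ι V : Type*} [AddCommGroup V] [Module ℝ V] (γ : Basis ι ℝ (Dual ℝ V))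

lemma convex_setOf_forall_pos : Convex ℝ {x : V | ∀ i, 0 < γ i x} := by
  simpa only [ofPred_forall] using convex_iInter fun i => convex_halfSpace_gt (γ i).isLinear 0

variable [Fintype ι] [DecidableEq ι] [FiniteDimensional ℝ V]

def preDualBasis : Basis ι ℝ V := γ.dualBasis.map (evalEquiv ℝ V).symm

@[simp]
lemma preDualBasis_repr (x : V) (j : ι) : γ.preDualBasis.repr x j = γ j x := by
  simp [preDualBasis]

lemma apply_preDualBasis (i j : ι) : γ i (γ.preDualBasis j) = (Pi.single j 1 : ι → ℝ) i := by
  rw [← preDualBasis_repr, repr_self, Finsupp.single_eq_pi_single]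

lemma sum_apply_smul_preDualBasis (x : V) : ∑ j, γ j x • γ.preDualBasis j = x := by
  simpa using γ.preDualBasis.sum_repr x

lemma apply_eq_sum_mul_apply_preDualBasis (α : Dual ℝ V) (x : V) :
    α x = ∑ j, γ j x * α (γ.preDualBasis j) := by
  conv_lhs => rw [← γ.sum_apply_smul_preDualBasis x]
  simp [map_sum]

variable [TopologicalSpace V] [IsTopologicalAddGroup V] [ContinuousSMul ℝ V] [T2Space V]

lemma closure_setOf_forall_pos :
    closure {x : V | ∀ i, 0 < γ i x} = {x | ∀ i, 0 ≤ γ i x} := by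
  have hK : {x : V | ∀ i, 0 < γ i x} =
      γ.preDualBasis.equivFunL ⁻¹' univ.pi fun _ => Ioi 0 := by
    ext x
    simp
  rw [hK, ← ContinuousLinearEquiv.preimage_closure, closure_pi_set]
  ext x
  simp [Pi.le_def]

lemma preDualBasis_mem_closure (j : ι) :
    γ.preDualBasis j ∈ closure {x : V | ∀ i, 0 < γ i x} := by
  rw [closure_setOf_forall_pos]
  intro i
  rw [apply_preDualBasis, Pi.single_apply]
  split_ifs <;> norm_num

lemma isWall_dualKer (i : ι) : IsWall {x : V | ∀ i, 0 < γ i x} (dualKer (γ i)) := by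
  refine ⟨⟨γ i, γ.ne_zero i, rfl⟩, ?_, ?_⟩
  · exact eq_empty_of_forall_notMem fun x ⟨hx0, hxK⟩ => (hxK i).ne' hx0
  refine Subset.antisymm (Submodule.span_le (p := LinearMap.ker (γ i)).mpr inter_subset_left)
    fun x hx => ?_
  rw [← γ.sum_apply_smul_preDualBasis x]
  refine Submodule.sum_mem _ fun j _ => ?_
  by_cases hji : j = i
  · subst hji
    simp [show γ j x = 0 from hx]
  · refine Submodule.smul_mem _ _ (Submodule.subset_span ⟨?_, γ.preDualBasis_mem_closure j⟩)
    simp [dualKer, apply_preDualBasis, Ne.symm hji]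

lemma exists_dualKer_eq_of_pos {α : Dual ℝ V} (hα : α ≠ 0)
    (hpos : ∀ x ∈ {x : V | ∀ i, 0 < γ i x}, 0 < α x)
    (hspan : (Submodule.span ℝ (dualKer α ∩ closure {x : V | ∀ i, 0 < γ i x}) : Set V) =
      dualKer α) :
    ∃ i, dualKer α = dualKer (γ i) := by
  set d := γ.preDualBasis
  have hnonneg : ∀ j, 0 ≤ α (d j) := fun j =>
    closure_minimal (fun x hx => (hpos x hx).le)
      (isClosed_le continuous_const α.continuous_of_finiteDimensional)
      (γ.preDualBasis_mem_closure j)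
  obtain ⟨j, hj⟩ : ∃ j, 0 < α (d j) := by
    by_contra! h
    exact hα (d.ext fun j => by simpa using le_antisymm (h j) (hnonneg j))
  have hsub : dualKer α ∩ closure {x : V | ∀ i, 0 < γ i x} ⊆ dualKer (γ j) := by
    rintro x ⟨hx0, hxK⟩
    rw [closure_setOf_forall_pos] at hxK
    have hterms := (Finset.sum_eq_zero_iff_of_nonneg fun k _ =>
      mul_nonneg (hxK k) (hnonneg k)).mp ((γ.apply_eq_sum_mul_apply_preDualBasis α x).symm.trans hx0)
    exact (mul_eq_zero.mp (hterms j (Finset.mem_univ j))).resolve_right hj.ne'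
  refine ⟨j, dualKer_eq_of_subset hα (γ.ne_zero j) ?_⟩
  rw [← hspan]
  exact Submodule.span_le.mpr (show _ ⊆ (LinearMap.ker (γ j) : Set V) from hsub)

theorem isWall_setOf_forall_pos_iff {H : Set V} :
    IsWall {x : V | ∀ i, 0 < γ i x} H ↔ ∃ i, H = dualKer (γ i) := by
  refine ⟨?_, fun ⟨i, hi⟩ => hi ▸ γ.isWall_dualKer i⟩
  rintro ⟨⟨α, hα, rfl⟩, hdisj, hspan⟩
  have hsign := γ.convex_setOf_forall_pos.isPreconnected.forall_pos_or_forall_neg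
    α.continuous_of_finiteDimensional.continuousOn
    fun x hxK hx0 => (eq_empty_iff_forall_notMem.mp hdisj) x ⟨hx0, hxK⟩
  rcases hsign with hpos | hneg
  · exact γ.exists_dualKer_eq_of_pos hα hpos hspan
  · rw [← dualKer_neg] at hspan ⊢
    exact γ.exists_dualKer_eq_of_pos (neg_ne_zero.mpr hα)
      (fun x hx => neg_pos.mpr (hneg x hx)) hspan

end Module.Basis

section WeylGroupoid

variable {I A : Type*} [Fintype I] [DecidableEq I]

lemma gcmSigma_add (C : Matrix I I ℤ) (i : I) (v w : I → ℤ) :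
    gcmSigma C i (v + w) = gcmSigma C i v + gcmSigma C i w := by
  funext k
  simp only [gcmSigma, Pi.add_apply, mul_add, Finset.sum_add_distrib]
  split_ifs <;> ring

lemma gcmSigma_gcmSigma {C : Matrix I I ℤ} {i : I} (hC : C i i = 2) (v : I → ℤ) :
    gcmSigma C i (gcmSigma C i v) = v := by
  funext k
  by_cases hk : k = i
  · subst hk
    simp only [gcmSigma, ↓reduceIte, mul_sub, mul_ite, mul_zero, Finset.sum_sub_distrib,
      Finset.sum_ite_eq', Finset.mem_univ, hC]
    ring
  · simp [gcmSigma, hk]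

def gcmSigmaAddEquiv {C : Matrix I I ℤ} {i : I} (hC : C i i = 2) : (I → ℤ) ≃+ (I → ℤ) where
  toFun := gcmSigma C i
  invFun := gcmSigma C i
  left_inv := gcmSigma_gcmSigma hC
  right_inv := gcmSigma_gcmSigma hC
  map_add' := gcmSigma_add C i

lemma WeylHom.exists_addEquiv {ρ : I → A → A} {C : A → Matrix I I ℤ}
    (hC : ∀ c i, C c i i = 2) {b a : A} {u : (I → ℤ) → (I → ℤ)} (hu : WeylHom ρ C b a u) :
    ∃ e : (I → ℤ) ≃+ (I → ℤ), ⇑e = u := by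
  induction hu with
  | id => exact ⟨AddEquiv.refl _, rfl⟩
  | @comp c _ i _ ih =>
    obtain ⟨e, rfl⟩ := ih
    exact ⟨e.trans (gcmSigmaAddEquiv (hC c i)), rfl⟩

end WeylGroupoid

section GeometricRealization

variable {r : ℕ} (bβ : Module.Basis (Fin r) ℝ (Module.Dual ℝ (Vr r)))

lemma psiMap_eq_linearCombination (v : Fin r → ℤ) :
    psiMap bβ v = Fintype.linearCombination ℤ bβ v := by
  simp only [psiMap, Fintype.linearCombination_apply]
  exact Finset.sum_congr rfl fun i _ => Int.cast_smul_eq_zsmul ℝ (v i) (bβ i)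

lemma top_le_span_psiMap_addEquiv (e : (Fin r → ℤ) ≃+ (Fin r → ℤ)) :
    ⊤ ≤ Submodule.span ℝ (range fun i => psiMap bβ (e (Pi.single i 1))) := by
  set f := (Fintype.linearCombination ℤ bβ).comp e.toIntLinearEquiv.toLinearMap
  have hrange : ∀ v, f v ∈ Submodule.span ℤ (range fun i => psiMap bβ (e (Pi.single i 1))) := by
    intro v
    have hv : v ∈ Submodule.span ℤ (range (Pi.basisFun ℤ (Fin r))) := by
      rw [(Pi.basisFun ℤ (Fin r)).span_eq]; trivial
    have := Submodule.mem_map_of_mem (f := f) hv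
    rw [Submodule.map_span, ← range_comp] at this
    simpa [Function.comp_def, psiMap_eq_linearCombination, f] using this
  rw [← bβ.span_eq, Submodule.span_le]
  rintro _ ⟨k, rfl⟩
  have hk : bβ k = f (e.symm (Pi.single k 1)) := by
    simp [f, Fintype.linearCombination_apply, Pi.single_apply]
  rw [hk]
  exact Submodule.span_le_restrictScalars ℤ ℝ _ (hrange _)

end GeometricRealization

theorem statement_9_general {r : ℕ} {A : Type*}
    (ρ : Fin r → A → A) (C : A → Matrix (Fin r) (Fin r) ℤ)
    (hCG : IsCartanGraph ρ C)
    (a : A) (bβ : Module.Basis (Fin r) ℝ (Module.Dual ℝ (Vr r)))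
    (b : A) (u : (Fin r → ℤ) → (Fin r → ℤ)) (hu : WeylHom ρ C b a u) :
    ∀ H : Set (Vr r), IsLinearHyperplane H →
      ((∃ i : Fin r, H = dualKer (psiMap bβ (u (Pi.single i 1)))) ↔
        (H ∩ Kch bβ u = ∅ ∧
          (Submodule.span ℝ (H ∩ closure (Kch bβ u)) : Set (Vr r)) = H)) := by
  obtain ⟨e, rfl⟩ := hu.exists_addEquiv fun c => (hCG.2.1 c).1
  let γ := basisOfTopLeSpanOfCardEqFinrank _ (top_le_span_psiMap_addEquiv bβ e)
    (by rw [Module.finrank_eq_card_basis bβ])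
  intro H hH
  have hwall := γ.isWall_setOf_forall_pos_iff (H := H)
  simp only [γ, coe_basisOfTopLeSpanOfCardEqFinrank] at hwall
  exact hwall.symm.trans (and_iff_right hH)

/-- characterization of walls: in the geometric realization of a connected
simply connected Cartan graph `𝒞` with real root system, for `b ∈ A` and a hyperplane
`H ⊆ V`: `H ∈ W^b` (i.e. `H = ker β` for some `β ∈ B^b`) if and only if `H ∩ K^b = ∅`
and `H ∩ cl(K^b)` spans `H`. -/
theorem statement_9 {r : ℕ} {A : Type*}
    (ρ : Fin r → A → A) (C : A → Matrix (Fin r) (Fin r) ℤ)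
    (hCG : IsCartanGraph ρ C) (hconn : CGConnected ρ C) (hsc : CGSimplyConnected ρ C)
    (hRS : IsRootSystemOfType ρ C (realRootsAt ρ C))
    (a : A) (bβ : Module.Basis (Fin r) ℝ (Module.Dual ℝ (Vr r)))
    (b : A) (u : (Fin r → ℤ) → (Fin r → ℤ)) (hu : WeylHom ρ C b a u) :
    ∀ H : Set (Vr r), IsLinearHyperplane H →
      ((∃ i : Fin r, H = dualKer (psiMap bβ (u (Pi.single i 1)))) ↔
        (H ∩ Kch bβ u = ∅ ∧
          (Submodule.span ℝ (H ∩ closure (Kch bβ u)) : Set (Vr r)) = H)) :=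
  statement_9_general ρ C hCG a bβ b u hu
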